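/- arXiv:2511.03335 — 3 statements merged into one kernel-verified Lean document; each statement's English description precedes it below -/
import Mathlib

section
/- For every signed graph (G, σ): χ_b(G, σ) ≤ χ((G, σ)⁻) ≤ 2·χ_b(G, σ). -/
open SimpleGraph

namespace SignedGS

variable {V : Type*}

/-- The sign of a walk in a signed graph: the product of the signs of its edges. -/
def walkSign {G : SimpleGraph V} (σ : Sym2 V → ℤˣ) {u v : V} (w : G.Walk u v) : ℤˣ :=
  (w.edges.map σ).prod

/-- `X` is a balanced set of `(G, σ)`: every cycle of the subgraph induced on `X`
is positive. -/
def IsBalancedSet (G : SimpleGraph V) (σ : Sym2 V → ℤˣ) (X : Set V) : Prop :=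
  ∀ ⦃v : V⦄ (w : G.Walk v v), w.IsCycle → (∀ u ∈ w.support, u ∈ X) → walkSign σ w = 1

/-- `(G, σ)` can be covered by `n` balanced sets. -/
def BalancedColorable (G : SimpleGraph V) (σ : Sym2 V → ℤˣ) (n : ℕ) : Prop :=
  ∃ f : V → Fin n, ∀ i : Fin n, IsBalancedSet G σ {v | f v = i}

/-- The balanced chromatic number of `(G, σ)`. -/
noncomputable def balancedChromNum (G : SimpleGraph V) (σ : Sym2 V → ℤˣ) : ℕ :=
  sInf {n | BalancedColorable G σ n}

/-- The set `X ⊆ V` can be covered by `n` sets each of which is balanced in `(G, σ)`. -/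
def BalancedColorableOn (G : SimpleGraph V) (σ : Sym2 V → ℤˣ) (X : Set V) (n : ℕ) : Prop :=
  ∃ f : V → Fin n, ∀ i : Fin n, IsBalancedSet G σ {v | v ∈ X ∧ f v = i}

/-- The balanced chromatic number of the signed subgraph of `(G, σ)` induced on `X`. -/
noncomputable def balancedChromNumOn (G : SimpleGraph V) (σ : Sym2 V → ℤˣ) (X : Set V) : ℕ :=
  sInf {n | BalancedColorableOn G σ X n}

/-- `(G, σ)⁻` : the spanning subgraph of `G` consisting of the negative edges. -/
def negSubgraph (G : SimpleGraph V) (σ : Sym2 V → ℤˣ) : SimpleGraph V where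
  Adj u v := G.Adj u v ∧ σ s(u, v) = -1
  symm := by
    constructor
    intro u v h
    refine ⟨h.1.symm, ?_⟩
    rw [Sym2.eq_swap]
    exact h.2
  loopless := by constructor; intro v h; exact G.loopless.irrefl v h.1

/-- Two signatures on `G` are switching equivalent. -/
def SwitchEquiv (G : SimpleGraph V) (σ σ' : Sym2 V → ℤˣ) : Prop :=
  ∃ η : V → ℤˣ, ∀ u v : V, G.Adj u v → σ' s(u, v) = η u * σ s(u, v) * η v

/-- Every triangle of `(G, σ)` is positive. -/
def AllTrianglesPositive (G : SimpleGraph V) (σ : Sym2 V → ℤˣ) : Prop :=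
  ∀ u v w : V, G.Adj u v → G.Adj v w → G.Adj u w →
    σ s(u, v) * σ s(v, w) * σ s(u, w) = 1

/-- `G` contains an induced copy of `F`. -/
def HasInducedCopy {W : Type*} (F : SimpleGraph W) (G : SimpleGraph V) : Prop :=
  ∃ f : W ↪ V, ∀ a b : W, G.Adj (f a) (f b) ↔ F.Adj a b

/-- The star `K_{1,m}` with center `0` and `m` leaves. -/
def starGraph (m : ℕ) : SimpleGraph (Fin (m + 1)) where
  Adj a b := (a = 0 ∨ b = 0) ∧ a ≠ b
  symm := by constructor; rintro a b ⟨h1, h2⟩; exact ⟨h1.symm, h2.symm⟩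
  loopless := by constructor; rintro a ⟨_, h⟩; exact h rfl

private def disjUnionAdj {W1 W2 : Type*} (F1 : SimpleGraph W1) (F2 : SimpleGraph W2) :
    W1 ⊕ W2 → W1 ⊕ W2 → Prop
  | .inl x, .inl y => F1.Adj x y
  | .inr x, .inr y => F2.Adj x y
  | _, _ => False

/-- The disjoint union `F1 + F2` of two graphs. -/
def disjUnion {W1 W2 : Type*} (F1 : SimpleGraph W1) (F2 : SimpleGraph W2) :
    SimpleGraph (W1 ⊕ W2) where
  Adj := disjUnionAdj F1 F2
  symm := by
    constructor
    rintro (x | x) (y | y) h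
    · exact F1.adj_symm h
    · exact h.elim
    · exact h.elim
    · exact F2.adj_symm h
  loopless := by
    constructor
    rintro (x | x) h
    · exact F1.loopless.irrefl x h
    · exact F2.loopless.irrefl x h

private def fullJoinAdj {W1 W2 : Type*} (G1 : SimpleGraph W1) (G2 : SimpleGraph W2) :
    W1 ⊕ W2 → W1 ⊕ W2 → Prop
  | .inl x, .inl y => G1.Adj x y
  | .inr x, .inr y => G2.Adj x y
  | _, _ => True

/-- The full join `G1 ⋈ G2` of two vertex-disjoint graphs. -/
def fullJoin {W1 W2 : Type*} (G1 : SimpleGraph W1) (G2 : SimpleGraph W2) :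
    SimpleGraph (W1 ⊕ W2) where
  Adj := fullJoinAdj G1 G2
  symm := by
    constructor
    rintro (x | x) (y | y) h
    · exact G1.adj_symm h
    · trivial
    · trivial
    · exact G2.adj_symm h
  loopless := by
    constructor
    rintro (x | x) h
    · exact G1.loopless.irrefl x h
    · exact G2.loopless.irrefl x h

/-- The linear forest with `l` components, the `i`-th component being a path
on `m i` vertices. -/
def linearForest (l : ℕ) (m : Fin l → ℕ) : SimpleGraph (Σ i : Fin l, Fin (m i)) where
  Adj a b := a.1 = b.1 ∧ ((a.2 : ℕ) + 1 = (b.2 : ℕ) ∨ (b.2 : ℕ) + 1 = (a.2 : ℕ))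
  symm := by constructor; rintro a b ⟨h1, h2⟩; exact ⟨h1.symm, h2.symm⟩
  loopless := by constructor; rintro a ⟨_, h⟩; omega

/-- `(G, σ)` has an induced subgraph switching equivalent to the all-negative `K_4`. -/
def HasSwitchK4Neg (G : SimpleGraph V) (σ : Sym2 V → ℤˣ) : Prop :=
  ∃ f : Fin 4 ↪ V, (∀ a b : Fin 4, a ≠ b → G.Adj (f a) (f b)) ∧
    ∃ η : Fin 4 → ℤˣ, ∀ a b : Fin 4, a ≠ b → η a * σ s(f a, f b) * η b = -1

/-- `(G, σ)` has a triangle all of whose edges are negative. -/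
def HasNegTriangle (G : SimpleGraph V) (σ : Sym2 V → ℤˣ) : Prop :=
  ∃ u v w : V, G.Adj u v ∧ G.Adj v w ∧ G.Adj u w ∧
    σ s(u, v) = -1 ∧ σ s(v, w) = -1 ∧ σ s(u, w) = -1

/-- `(G, σ)` has four vertices inducing a copy of `(K_4, M)`: a complete graph on four
vertices whose negative edges form a perfect matching. -/
def HasK4M (G : SimpleGraph V) (σ : Sym2 V → ℤˣ) : Prop :=
  ∃ a b c d : V, a ≠ b ∧ a ≠ c ∧ a ≠ d ∧ b ≠ c ∧ b ≠ d ∧ c ≠ d ∧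
    G.Adj a b ∧ G.Adj a c ∧ G.Adj a d ∧ G.Adj b c ∧ G.Adj b d ∧ G.Adj c d ∧
    σ s(a, b) = -1 ∧ σ s(c, d) = -1 ∧
    σ s(a, c) = 1 ∧ σ s(a, d) = 1 ∧ σ s(b, c) = 1 ∧ σ s(b, d) = 1

/-- The vertices of the shift graph `S_{k,n}`: strictly increasing `k`-sequences
with values in `{1, …, n}`. -/
def ShiftVertex (k n : ℕ) : Type :=
  {s : Fin k → ℕ // StrictMono s ∧ ∀ i, s i ∈ Finset.Icc 1 n}

/-- `b` is obtained from `a` by shifting: `b = (a_2, …, a_k, t)` for some `t`. -/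
def ShiftFollows {k n : ℕ} (a b : ShiftVertex k n) : Prop :=
  ∀ (i : ℕ) (h : i + 1 < k), b.1 ⟨i, Nat.lt_of_succ_lt h⟩ = a.1 ⟨i + 1, h⟩

/-- The shift graph `S_{k,n}`. -/
def shiftGraph (k n : ℕ) : SimpleGraph (ShiftVertex k n) where
  Adj a b := a ≠ b ∧ (ShiftFollows a b ∨ ShiftFollows b a)
  symm := by constructor; rintro a b ⟨h1, h2⟩; exact ⟨h1.symm, h2.symm⟩
  loopless := by constructor; rintro a ⟨h, _⟩; exact h rfl

/-! A colour class of a proper colouring of `(G, σ)⁻` spans only positive edges, so it is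
balanced. Conversely, every closed walk inside a balanced set `X` is positive: bypassing it down
to the trivial path only removes cycles and back-and-forth edges, all of which are positive. A
closed walk of negative edges inside `X` thus has sign `(-1) ^ length = 1`, so the negative edges
inside `X` form a bipartite graph, and splitting each of `k` balanced colour classes in two
properly colours `(G, σ)⁻` with `2k` colours. -/

section WalkSign

variable {G : SimpleGraph V} {σ : Sym2 V → ℤˣ}

@[simp] lemma walkSign_nil {v : V} : walkSign σ (Walk.nil : G.Walk v v) = 1 := rfl

@[simp] lemma walkSign_cons {u v w : V} (h : G.Adj u v) (p : G.Walk v w) :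
    walkSign σ (Walk.cons h p) = σ s(u, v) * walkSign σ p := by
  simp [walkSign]

lemma walkSign_append {u v w : V} (p : G.Walk u v) (q : G.Walk v w) :
    walkSign σ (p.append q) = walkSign σ p * walkSign σ q := by
  simp [walkSign, Walk.edges_append]

lemma walkSign_eq_pow {u v : V} {p : G.Walk u v} {s : ℤˣ} (h : ∀ e ∈ p.edges, σ e = s) :
    walkSign σ p = s ^ p.length := by
  rw [walkSign, List.map_congr_left h, List.map_const', List.prod_replicate, Walk.length_edges]

end WalkSign

lemma _root_.SimpleGraph.Walk.IsPath.edges_eq_singleton_of_mem_edges {G : SimpleGraph V}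
    {u w : V} {p : G.Walk w u} (hp : p.IsPath) (he : s(u, w) ∈ p.edges) :
    p.edges = [s(w, u)] := by
  cases p with
  | nil => simp at he
  | @cons _ x _ h r =>
    rw [Walk.cons_isPath_iff] at hp
    rw [Walk.edges_cons, List.mem_cons] at he
    rcases he with he | he
    · obtain rfl : x = u := by
        rcases Sym2.eq_iff.mp he with ⟨rfl, rfl⟩ | ⟨rfl, -⟩
        · exact absurd h (G.loopless.irrefl _)
        · rfl
      simp [(Walk.isPath_iff_nil.mp hp.1).eq_nil]
    · exact absurd (r.snd_mem_support_of_mem_edges he) hp.2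

lemma negSubgraph_le {G : SimpleGraph V} {σ : Sym2 V → ℤˣ} : negSubgraph G σ ≤ G :=
  fun _ _ h => h.1

namespace IsBalancedSet

variable {G : SimpleGraph V} {σ : Sym2 V → ℤˣ} {X : Set V}

lemma sign_mul_walkSign_eq_one (hX : IsBalancedSet G σ X) {u w : V} (h : G.Adj u w)
    {p : G.Walk w u} (hp : p.IsPath) (hpX : ∀ x ∈ p.support, x ∈ X) :
    σ s(u, w) * walkSign σ p = 1 := by
  by_cases he : s(u, w) ∈ p.edges
  · rw [walkSign, hp.edges_eq_singleton_of_mem_edges he, Sym2.eq_swap]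
    simp [Int.units_mul_self]
  · rw [← walkSign_cons h]
    refine hX _ ((Walk.cons_isCycle_iff p h).mpr ⟨hp, he⟩) fun x hx => ?_
    rcases List.mem_cons.mp (Walk.support_cons h p ▸ hx) with rfl | hx
    · exact hpX _ p.end_mem_support
    · exact hpX x hx

lemma walkSign_bypass [DecidableEq V] (hX : IsBalancedSet G σ X) {u v : V} (p : G.Walk u v)
    (hpX : ∀ x ∈ p.support, x ∈ X) : walkSign σ p.bypass = walkSign σ p := by
  induction p with
  | nil => rfl
  | @cons u w v h q ih =>
    have ih := ih fun x hx => hpX x (List.mem_cons_of_mem u hx)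
    dsimp only [Walk.bypass]
    split_ifs with hu
    · have hq' := q.bypass.support_takeUntil_subset_support hu
      rw [walkSign_cons, ← ih]
      conv_rhs => rw [← q.bypass.take_spec hu, walkSign_append, ← mul_assoc]
      rw [hX.sign_mul_walkSign_eq_one h (q.bypass_isPath.takeUntil hu)
          fun x hx => hpX x (List.mem_cons_of_mem u (q.support_bypass_subset_support (hq' hx))),
        one_mul]
    · rw [walkSign_cons, walkSign_cons, ih]

lemma walkSign_eq_one (hX : IsBalancedSet G σ X) {v : V} (w : G.Walk v v)
    (hwX : ∀ x ∈ w.support, x ∈ X) : walkSign σ w = 1 := by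
  classical
  rw [← hX.walkSign_bypass w hwX, (Walk.isPath_iff_nil.mp w.bypass_isPath).eq_nil, walkSign_nil]

lemma colorable_two_negSubgraph_induce (hX : IsBalancedSet G σ X) :
    ((negSubgraph G σ).induce X).Colorable 2 := by
  refine two_colorable_iff_forall_loop_even.mpr fun v w => ?_
  let q := w.map (Embedding.induce X).toHom
  have hneg : ∀ e ∈ (q.mapLe negSubgraph_le).edges, σ e = -1 := by
    intro e he
    rw [Walk.edges_mapLe_eq_edges] at he
    induction e using Sym2.ind with
    | _ a b => exact (q.edges_subset_edgeSet he).2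
  have hqX : ∀ x ∈ (q.mapLe negSubgraph_le).support, x ∈ X := by
    rw [Walk.support_mapLe_eq_support, Walk.support_map]
    intro x hx
    obtain ⟨y, -, rfl⟩ := List.mem_map.mp hx
    exact y.2
  have hsign := hX.walkSign_eq_one _ hqX
  rwa [walkSign_eq_pow hneg, neg_one_pow_eq_one_iff_even (by decide), Walk.length_mapLe,
    Walk.length_map] at hsign

end IsBalancedSet

lemma _root_.SimpleGraph.colorable_mul_of_forall_induce_colorable {H : SimpleGraph V} {k m : ℕ}
    (f : V → Fin k) (h : ∀ i, (H.induce {v | f v = i}).Colorable m) : H.Colorable (k * m) := by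
  let c i := (h i).some
  let C : H.Coloring (Fin k × Fin m) := Coloring.mk (fun v => (f v, c (f v) ⟨v, rfl⟩))
    fun {a b} hab heq => by
      obtain ⟨hf, hcab⟩ := Prod.mk.inj heq
      have hcb : ∀ j (hj : f b = j), c (f b) ⟨b, rfl⟩ = c j ⟨b, hj⟩ := by rintro j rfl; rfl
      exact (c (f a)).valid (show (H.induce {v | f v = f a}).Adj ⟨a, rfl⟩ ⟨b, hf.symm⟩ from hab)
        (hcab.trans (hcb _ hf.symm))
  simpa using C.colorable

section Bounds

variable {G : SimpleGraph V} {σ : Sym2 V → ℤˣ}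

lemma balancedColorable_of_colorable {n : ℕ} (h : (negSubgraph G σ).Colorable n) :
    BalancedColorable G σ n := by
  obtain ⟨C⟩ := h
  refine ⟨C, fun i v w _ hwX => ?_⟩
  rw [walkSign_eq_pow (s := 1), one_pow]
  intro e he
  induction e using Sym2.ind with
  | _ a b =>
    rcases Int.units_eq_one_or (σ s(a, b)) with hpos | hneg
    · exact hpos
    · have hCab : C a = C b := (hwX a (w.fst_mem_support_of_mem_edges he)).trans
        (hwX b (w.snd_mem_support_of_mem_edges he)).symm
      exact absurd hCab (C.valid ⟨w.adj_of_mem_edges he, hneg⟩)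

lemma colorable_of_balancedColorable {k : ℕ} (h : BalancedColorable G σ k) :
    (negSubgraph G σ).Colorable (k * 2) := by
  obtain ⟨f, hf⟩ := h
  exact colorable_mul_of_forall_induce_colorable f fun i =>
    (hf i).colorable_two_negSubgraph_induce

end Bounds

/-- χ_b(G,σ) ≤ χ((G,σ)⁻) ≤ 2 χ_b(G,σ). -/
theorem stmt2 {V : Type*} [Fintype V] (G : SimpleGraph V) (σ : Sym2 V → ℤˣ) :
    (balancedChromNum G σ : ℕ∞) ≤ (negSubgraph G σ).chromaticNumber ∧
      (negSubgraph G σ).chromaticNumber ≤ 2 * (balancedChromNum G σ : ℕ∞) := by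
  have hχb : BalancedColorable G σ (balancedChromNum G σ) :=
    Nat.sInf_mem (s := {n | BalancedColorable G σ n})
      ⟨_, balancedColorable_of_colorable (negSubgraph G σ).colorable_of_fintype⟩
  refine ⟨le_chromaticNumber_iff_colorable.mpr fun m hm =>
      Nat.cast_le.mpr (Nat.sInf_le (balancedColorable_of_colorable hm)), ?_⟩
  calc (negSubgraph G σ).chromaticNumber ≤ (balancedChromNum G σ * 2 : ℕ) :=
        (colorable_of_balancedColorable hχb).chromaticNumber_le
    _ = 2 * (balancedChromNum G σ : ℕ∞) := by push_cast; ring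

end SignedGS
end

section
/- Let F_1 and F_2 be finite simple graphs and let s, t be positive integers such that every signed graph in which every triangle is positive and which contains no induced copy of F_1 (in its underlying graph) satisfies χ_b ≤ s, and every signed graph in which every triangle is positive and which contains no induced copy of F_2 satisfies χ_b ≤ t. Then every signed graph in which every triangle is positive and whose underlying graph contains no induced copy of the disjoint union F_1 + F_2 satisfies χ_b ≤ max{s, |V(F_1)| + t}. -/
open SimpleGraph

namespace SignedGS

variable {V : Type*}

/-!
If `G` has no induced `F1`, then `χ_b ≤ s`. Otherwise fix an induced copy of `F1` on vertices
`x_1, …, x_k`. Since all triangles are positive, each closed neighbourhood `N[x_i]` is balanced,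
so these `k` sets cover their union `B`. The rest `G - B` has no induced `F2`, since such a copy
together with the copy of `F1` (which has no vertices in or edges to `G - B`) would be an induced
`F1 + F2`; hence `G - B` needs at most `t` further balanced sets.
-/

section Balance

variable {G : SimpleGraph V} {σ : Sym2 V → ℤˣ}

lemma IsBalancedSet.mono {X Y : Set V} (hY : IsBalancedSet G σ Y) (hXY : X ⊆ Y) :
    IsBalancedSet G σ X :=
  fun _ w hc hs => hY w hc fun u hu => hXY (hs u hu)

lemma walkSign_eq_of_potential {X : Set V} {η : V → ℤˣ}
    (hη : ∀ x y, G.Adj x y → x ∈ X → y ∈ X → σ s(x, y) = η x * η y) {u v : V}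
    (w : G.Walk u v) (hw : ∀ x ∈ w.support, x ∈ X) : walkSign σ w = η u * η v := by
  induction w with
  | nil => simp [walkSign, Int.units_mul_self]
  | @cons u x v hux p ih =>
    have hp := ih fun z hz => hw z (by simp [hz])
    simp only [walkSign, Walk.edges_cons, List.map_cons, List.prod_cons] at hp ⊢
    rw [hp, hη u x hux (hw u (by simp)) (hw x (by simp)), mul_assoc, ← mul_assoc (η x),
      Int.units_mul_self, one_mul]

lemma isBalancedSet_of_potential {X : Set V} (η : V → ℤˣ)
    (hη : ∀ x y, G.Adj x y → x ∈ X → y ∈ X → σ s(x, y) = η x * η y) :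
    IsBalancedSet G σ X := by
  intro v w _ hw
  rw [walkSign_eq_of_potential hη w hw, Int.units_mul_self]

lemma units_int_eq_mul_of_mul_mul_eq_one {a b c : ℤˣ} (h : a * b * c = 1) : b = a * c := by
  rcases Int.units_eq_one_or a with rfl | rfl <;> rcases Int.units_eq_one_or c with rfl | rfl <;>
    simpa [neg_eq_iff_eq_neg] using h

/-- Switching at the neighbours `v` of `a` with `σ s(a, v) = -1` makes every edge of the
closed neighbourhood positive: the edges at `a` directly, the others because their triangle
with `a` is positive. -/
lemma AllTrianglesPositive.isBalancedSet_closedNbhd (hpos : AllTrianglesPositive G σ) (a : V) :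
    IsBalancedSet G σ (insert a (G.neighborSet a)) := by
  classical
  refine isBalancedSet_of_potential (fun v => if v = a then 1 else σ s(a, v)) ?_
  intro x y hxy hx hy
  rcases hx with rfl | hx <;> rcases hy with rfl | hy
  · exact absurd hxy (G.loopless.irrefl _)
  · simp [hxy.ne']
  · simp [hxy.ne, Sym2.eq_swap]
  · rw [mem_neighborSet] at hx hy
    simpa [hx.ne', hy.ne'] using units_int_eq_mul_of_mul_mul_eq_one (hpos a x y hx hxy hy)

lemma AllTrianglesPositive.induce (hpos : AllTrianglesPositive G σ) (R : Set V) :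
    AllTrianglesPositive (G.induce R) (fun e => σ (e.map Subtype.val)) :=
  fun x y z hxy hyz hxz => hpos x y z hxy hyz hxz

lemma IsBalancedSet.of_induce {R X : Set V}
    (hX : IsBalancedSet (G.induce R) (fun e => σ (e.map Subtype.val)) {v | ↑v ∈ X})
    (hXR : X ⊆ R) : IsBalancedSet G σ X := by
  intro v w hc hw
  have hwR : ∀ x ∈ w.support, x ∈ R := fun x hx => hXR (hw x hx)
  let φ : G.induce R ↪g G := Embedding.induce R
  have hmap : (w.induce R hwR).map φ.toHom = w := Walk.map_induce w hwR
  have hc' : (w.induce R hwR).IsCycle := by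
    rw [← Walk.isCycle_map_iff_of_injective (f := φ.toHom) φ.injective, hmap]
    exact hc
  have hsign := hX _ hc' fun x hx => hw x (by simpa using hx)
  have hedges : (w.induce R hwR).edges.map (Sym2.map Subtype.val) = w.edges :=
    (Walk.edges_map _ _).symm.trans (congrArg (fun p : G.Walk v v => p.edges) hmap)
  unfold walkSign at hsign ⊢
  rw [← hedges, List.map_map]
  exact hsign

end Balance

section Colorings

variable {G : SimpleGraph V} {σ : Sym2 V → ℤˣ}

lemma BalancedColorable.mono {m n : ℕ} (h : BalancedColorable G σ m) (hmn : m ≤ n) :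
    BalancedColorable G σ n := by
  obtain ⟨f, hf⟩ := h
  refine ⟨fun v => Fin.castLE hmn (f v), fun i => ?_⟩
  by_cases hi : (i : ℕ) < m
  · convert hf ⟨i, hi⟩ using 2
    simp [Fin.ext_iff]
  · intro v w _ hw
    have hv : (f v : ℕ) = i := congrArg Fin.val (hw v w.start_mem_support)
    exact absurd (hv ▸ (f v).isLt) hi

lemma balancedColorable_card [Fintype V] (G : SimpleGraph V) (σ : Sym2 V → ℤˣ) :
    BalancedColorable G σ (Fintype.card V) := by
  refine ⟨Fintype.equivFin V, fun i v w hc hw => ?_⟩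
  obtain ⟨x, hvx, q, rfl⟩ := Walk.not_nil_iff.mp hc.not_nil
  have hv := hw v (Walk.cons hvx q).start_mem_support
  have hx := hw x (by simp)
  exact absurd ((Fintype.equivFin V).injective (hv.trans hx.symm)) hvx.ne

lemma balancedColorable_of_balancedChromNum_le [Fintype V] {k : ℕ}
    (h : balancedChromNum G σ ≤ k) : BalancedColorable G σ k :=
  BalancedColorable.mono
    (Nat.sInf_mem (s := {n | BalancedColorable G σ n}) ⟨_, balancedColorable_card G σ⟩) h

lemma balancedColorable_of_cover {ι : Type*} [Fintype ι] (X : ι → Set V)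
    (hX : ∀ i, IsBalancedSet G σ (X i)) {t : ℕ}
    (hR : BalancedColorable (G.induce (⋃ i, X i)ᶜ) (fun e => σ (e.map Subtype.val)) t) :
    BalancedColorable G σ (Fintype.card ι + t) := by
  classical
  obtain ⟨g, hg⟩ := hR
  let e := Fintype.equivFin ι
  let c : V → Fin (Fintype.card ι + t) := fun v =>
    if h : v ∈ ⋃ i, X i then Fin.castAdd t (e (Set.mem_iUnion.mp h).choose)
    else Fin.natAdd _ (g ⟨v, h⟩)
  refine ⟨c, Fin.addCases (fun i => ?_) (fun j => ?_)⟩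
  · refine (hX (e.symm i)).mono fun v hv => ?_
    simp only [Set.mem_ofPred_eq, c] at hv
    split_ifs at hv with h
    · rw [Fin.castAdd_inj, ← e.eq_symm_apply] at hv
      exact hv ▸ (Set.mem_iUnion.mp h).choose_spec
    · simp only [Fin.ext_iff, Fin.val_castAdd, Fin.val_natAdd] at hv
      omega
  · refine IsBalancedSet.of_induce ((hg j).mono fun v hv => ?_) fun v hv => ?_
    · simp only [Set.mem_ofPred_eq, c, dif_neg v.2] at hv
      simpa [Fin.ext_iff] using hv
    · intro h
      simp only [Set.mem_ofPred_eq, c, dif_pos h] at hv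
      simp only [Fin.ext_iff, Fin.val_castAdd, Fin.val_natAdd] at hv
      omega

end Colorings

lemma hasInducedCopy_disjUnion {W1 W2 : Type*} {F1 : SimpleGraph W1} {F2 : SimpleGraph W2}
    {G : SimpleGraph V} (f : W1 ↪ V) (hf : ∀ a b, G.Adj (f a) (f b) ↔ F1.Adj a b)
    (h : HasInducedCopy F2 (G.induce (⋃ a, insert (f a) (G.neighborSet (f a)))ᶜ)) :
    HasInducedCopy (disjUnion F1 F2) G := by
  obtain ⟨g, hg⟩ := h
  have hfar : ∀ a b, g b ≠ f a ∧ ¬G.Adj (f a) (g b) := fun a b => by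
    have := (g b).2
    simp only [Set.mem_compl_iff, Set.mem_iUnion, Set.mem_insert_iff, mem_neighborSet,
      not_exists, not_or] at this
    exact this a
  refine ⟨⟨Sum.elim (fun a => f a) (fun b => (g b : V)), ?_⟩, ?_⟩
  · rintro (a | b) (a' | b') h <;> simp only [Sum.elim_inl, Sum.elim_inr] at h
    · rw [f.injective h]
    · exact absurd h.symm (hfar a b').1
    · exact absurd h (hfar a' b).1
    · rw [g.injective (Subtype.ext h)]
  · rintro (a | b) (a' | b')
    · exact hf a a'
    · exact iff_of_false (hfar a b').2 id
    · exact iff_of_false (fun h => (hfar a' b).2 h.symm) id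
    · exact hg b b'

theorem stmt9_general {W1 W2 : Type} [Fintype W1] [Fintype W2]
    (F1 : SimpleGraph W1) (F2 : SimpleGraph W2) (s t : ℕ)
    (h1 : ∀ (V : Type) [Fintype V] (G : SimpleGraph V) (σ : Sym2 V → ℤˣ),
      AllTrianglesPositive G σ → ¬ HasInducedCopy F1 G → balancedChromNum G σ ≤ s)
    (h2 : ∀ (V : Type) [Fintype V] (G : SimpleGraph V) (σ : Sym2 V → ℤˣ),
      AllTrianglesPositive G σ → ¬ HasInducedCopy F2 G → balancedChromNum G σ ≤ t) :
    ∀ (V : Type) [Fintype V] (G : SimpleGraph V) (σ : Sym2 V → ℤˣ),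
      AllTrianglesPositive G σ → ¬ HasInducedCopy (disjUnion F1 F2) G →
        balancedChromNum G σ ≤ max s (Fintype.card W1 + t) := by
  intro V _ G σ hpos hno
  refine Nat.sInf_le (show BalancedColorable G σ _ from ?_)
  by_cases hF1 : HasInducedCopy F1 G
  · obtain ⟨f, hf⟩ := hF1
    let R := (⋃ a, insert (f a) (G.neighborSet (f a)))ᶜ
    have : Fintype R := Fintype.ofFinite R
    have hR : ¬HasInducedCopy F2 (G.induce R) := fun h => hno (hasInducedCopy_disjUnion f hf h)
    refine (balancedColorable_of_cover _ (fun a => hpos.isBalancedSet_closedNbhd (f a)) ?_).mono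
      (le_max_right _ _)
    exact balancedColorable_of_balancedChromNum_le (h2 R _ _ (hpos.induce R) hR)
  · exact (balancedColorable_of_balancedChromNum_le (h1 V G σ hpos hF1)).mono (le_max_left _ _)

/-- disjoint unions of forbidden forests, in triangle-positive
signed graphs. -/
theorem stmt9 {W1 W2 : Type} [Fintype W1] [Fintype W2]
    (F1 : SimpleGraph W1) (F2 : SimpleGraph W2) (s t : ℕ) (hs : 0 < s) (ht : 0 < t)
    (h1 : ∀ (V : Type) [Fintype V] (G : SimpleGraph V) (σ : Sym2 V → ℤˣ),
      AllTrianglesPositive G σ → ¬ HasInducedCopy F1 G → balancedChromNum G σ ≤ s)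
    (h2 : ∀ (V : Type) [Fintype V] (G : SimpleGraph V) (σ : Sym2 V → ℤˣ),
      AllTrianglesPositive G σ → ¬ HasInducedCopy F2 G → balancedChromNum G σ ≤ t) :
    ∀ (V : Type) [Fintype V] (G : SimpleGraph V) (σ : Sym2 V → ℤˣ),
      AllTrianglesPositive G σ → ¬ HasInducedCopy (disjUnion F1 F2) G →
        balancedChromNum G σ ≤ max s (Fintype.card W1 + t) :=
  stmt9_general F1 F2 s t h1 h2

end SignedGS
end

section
/- There exists a signed graph (G, σ) such that: (i) no triangle of G has all three edges negative; (ii) no four vertices of G induce a copy of (K_4, M), the complete graph on 4 vertices whose negative edges form a perfect matching; (iii) G contains no induced path on 4 vertices; and (iv) the spanning subgraph (G, σ)⁻ formed by the negative edges of (G, σ) has chromatic number at least 6. -/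
open SimpleGraph

namespace SignedGS

variable {V : Type*}

/-!
The example is a full join of two disjoint unions of copies of a gadget: the 5-cycle `0 1 2 3 4`
with the chords `02` and `13`, whose vertices carry the classes `0, 1, 0, 1, 2 ∈ ZMod 3`. Inside
a copy an edge is negative iff its ends lie in different classes, so the negative edges form the
5-cycle; an edge from copy `i` on the left to copy `j` on the right is negative iff the class
increases by `r i j` along it. Joins and disjoint unions of `P₄`-free graphs are `P₄`-free. Since
classes govern the signs, a negative triangle or a `(K₄, M)` would force a contradiction between
classes in `ZMod 3`.

For the chromatic bound take more than `2 · 5⁵` left copies and one right copy for every pair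
`(j₁, j₂)` of left copies, with `r i (j₁, j₂)` equal to `1`, `2` or `0` according as `i = j₁`,
`i = j₂` or neither. A proper 5-colouring of the negative graph colours the left copies in at
most `5⁵` ways, so three left copies `i₁, i₂, i₃` are coloured alike. Every negative 5-cycle needs
three of the five colours, so the right copy `(i₂, i₃)` shares a colour with them, at vertices `l`
and `k` say. One of `i₁, i₂, i₃` has `r`-value `class l - class k`, and the corresponding edge is
negative and monochromatic.
-/

section P4Free

variable {V W : Type*}

def P4Free (G : SimpleGraph V) : Prop :=
  ∀ ⦃a b c d : V⦄, G.Adj a b → G.Adj b c → G.Adj c d → G.Adj a c ∨ G.Adj a d ∨ G.Adj b d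

theorem P4Free.not_hasInducedCopy {G : SimpleGraph V} (hG : P4Free G) :
    ¬ HasInducedCopy (pathGraph 4) G := by
  rintro ⟨f, hf⟩
  simp only [pathGraph_adj] at hf
  rcases hG ((hf 0 1).2 (by decide)) ((hf 1 2).2 (by decide)) ((hf 2 3).2 (by decide))
    with h | h | h
  · exact absurd ((hf 0 2).1 h) (by decide)
  · exact absurd ((hf 0 3).1 h) (by decide)
  · exact absurd ((hf 1 3).1 h) (by decide)

@[simp] theorem fullJoin_adj_inl_inl {G₁ : SimpleGraph V} {G₂ : SimpleGraph W} {x y : V} :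
    (fullJoin G₁ G₂).Adj (.inl x) (.inl y) ↔ G₁.Adj x y := Iff.rfl

@[simp] theorem fullJoin_adj_inr_inr {G₁ : SimpleGraph V} {G₂ : SimpleGraph W} {x y : W} :
    (fullJoin G₁ G₂).Adj (.inr x) (.inr y) ↔ G₂.Adj x y := Iff.rfl

@[simp] theorem fullJoin_adj_inl_inr {G₁ : SimpleGraph V} {G₂ : SimpleGraph W} {x : V} {y : W} :
    (fullJoin G₁ G₂).Adj (.inl x) (.inr y) := trivial

@[simp] theorem fullJoin_adj_inr_inl {G₁ : SimpleGraph V} {G₂ : SimpleGraph W} {x : W} {y : V} :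
    (fullJoin G₁ G₂).Adj (.inr x) (.inl y) := trivial

theorem P4Free.fullJoin {G₁ : SimpleGraph V} {G₂ : SimpleGraph W} (h₁ : P4Free G₁)
    (h₂ : P4Free G₂) : P4Free (fullJoin G₁ G₂) := by
  rintro (a | a) (b | b) (c | c) (d | d) hab hbc hcd <;>
    simp only [fullJoin_adj_inl_inl, fullJoin_adj_inr_inr, fullJoin_adj_inl_inr,
      fullJoin_adj_inr_inl, true_or, or_true] at hab hbc hcd ⊢
  exacts [h₁ hab hbc hcd, h₂ hab hbc hcd]

def copies (ι : Type*) (H : SimpleGraph W) : SimpleGraph (ι × W) where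
  Adj p q := p.1 = q.1 ∧ H.Adj p.2 q.2
  symm := ⟨fun _ _ h => ⟨h.1.symm, h.2.symm⟩⟩
  loopless := ⟨fun _ h => H.loopless.irrefl _ h.2⟩

theorem P4Free.copies {H : SimpleGraph W} (h : P4Free H) (ι : Type*) : P4Free (copies ι H) := by
  rintro ⟨i, a⟩ ⟨_, b⟩ ⟨_, c⟩ ⟨_, d⟩ ⟨rfl, hab⟩ ⟨rfl, hbc⟩ ⟨rfl, hcd⟩
  simpa [SignedGS.copies] using h hab hbc hcd

end P4Free

section Gadget

def gadget : SimpleGraph (Fin 5) :=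
  fromRel fun k l => l = k + 1 ∨ (k = 0 ∧ l = 2) ∨ (k = 1 ∧ l = 3)

instance : DecidableRel gadget.Adj := fun _ _ => inferInstanceAs (Decidable (_ ∧ _))

def gadgetClass : Fin 5 → ZMod 3 := ![0, 1, 0, 1, 2]

theorem gadget_p4Free : P4Free gadget := by
  unfold P4Free
  decide

theorem gadgetClass_eq_of_triangle : ∀ k l m : Fin 5,
    gadget.Adj k l → gadget.Adj l m → gadget.Adj k m →
    gadgetClass k = gadgetClass l ∨ gadgetClass l = gadgetClass m ∨
      gadgetClass k = gadgetClass m := by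
  decide

theorem gadget_adj_succ :
    ∀ k : Fin 5, gadget.Adj k (k + 1) ∧ gadgetClass k ≠ gadgetClass (k + 1) := by
  decide

theorem two_lt_card_image_of_ne_succ {α : Type*} [DecidableEq α] (f : Fin 5 → α)
    (hf : ∀ k, f k ≠ f (k + 1)) : 2 < (Finset.univ.image f).card := by
  have h01 := hf 0
  have h12 := hf 1
  have h23 := hf 2
  have h34 := hf 3
  have h40 : f 4 ≠ f 0 := hf 4
  simp only [Finset.two_lt_card_iff, Finset.mem_image, Finset.mem_univ, true_and]
  by_cases h20 : f 2 = f 0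
  · by_cases h31 : f 3 = f 1
    · exact ⟨f 0, f 1, f 4, ⟨0, rfl⟩, ⟨1, rfl⟩, ⟨4, rfl⟩, h01, h40.symm, h31 ▸ h34⟩
    · exact ⟨f 0, f 1, f 3, ⟨0, rfl⟩, ⟨1, rfl⟩, ⟨3, rfl⟩, h01, h20 ▸ h23, Ne.symm h31⟩
  · exact ⟨f 0, f 1, f 2, ⟨0, rfl⟩, ⟨1, rfl⟩, ⟨2, rfl⟩, h01, Ne.symm h20, h12⟩

theorem exists_eq_of_ne_succ {α : Type*} [Fintype α] (hα : Fintype.card α ≤ 5)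
    (f g : Fin 5 → α) (hf : ∀ k, f k ≠ f (k + 1)) (hg : ∀ k, g k ≠ g (k + 1)) :
    ∃ k l, f k = g l := by
  classical
  obtain ⟨a, ha⟩ := Finset.inter_nonempty_of_card_lt_card_add_card
    (Finset.subset_univ (Finset.univ.image f)) (Finset.subset_univ (Finset.univ.image g))
    (by
      have := two_lt_card_image_of_ne_succ f hf
      have := two_lt_card_image_of_ne_succ g hg
      rw [Finset.card_univ]
      omega)
  simp only [Finset.mem_inter, Finset.mem_image, Finset.mem_univ, true_and] at ha
  obtain ⟨⟨k, rfl⟩, l, hl⟩ := ha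
  exact ⟨k, l, hl.symm⟩

end Gadget

section GadgetJoin

variable {I J : Type*}

abbrev JoinVertex (I J : Type*) := (I × Fin 5) ⊕ (J × Fin 5)

def gadgetJoin (I J : Type*) : SimpleGraph (JoinVertex I J) :=
  fullJoin (copies I gadget) (copies J gadget)

def vertexClass : JoinVertex I J → ZMod 3 :=
  Sum.elim (gadgetClass ∘ Prod.snd) (gadgetClass ∘ Prod.snd)

def JoinNeg (r : I → J → ZMod 3) : JoinVertex I J → JoinVertex I J → Prop
  | .inl a, .inl b => gadgetClass a.2 ≠ gadgetClass b.2
  | .inr a, .inr b => gadgetClass a.2 ≠ gadgetClass b.2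
  | .inl a, .inr b | .inr b, .inl a => gadgetClass b.2 - gadgetClass a.2 = r a.1 b.1

variable (r : I → J → ZMod 3)

theorem joinNeg_comm (x y : JoinVertex I J) : JoinNeg r x y ↔ JoinNeg r y x := by
  rcases x with x | x <;> rcases y with y | y <;> simp only [JoinNeg, ne_comm]

open Classical in
noncomputable def joinSign : Sym2 (JoinVertex I J) → ℤˣ :=
  Sym2.lift ⟨fun x y => if JoinNeg r x y then -1 else 1, fun x y => by
    simp only [joinNeg_comm r x y]⟩

theorem joinSign_eq_neg_one {x y : JoinVertex I J} :
    joinSign r s(x, y) = -1 ↔ JoinNeg r x y := by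
  by_cases h : JoinNeg r x y <;> simp [joinSign, h]

theorem joinSign_eq_one {x y : JoinVertex I J} : joinSign r s(x, y) = 1 ↔ ¬ JoinNeg r x y := by
  by_cases h : JoinNeg r x y <;> simp [joinSign, h]

theorem joinNeg_iff_of_isLeft_eq {x y : JoinVertex I J} (h : x.isLeft = y.isLeft) :
    JoinNeg r x y ↔ vertexClass x ≠ vertexClass y := by
  rcases x with x | x <;> rcases y with y | y <;>
    simp only [Sum.isLeft_inl, Sum.isLeft_inr, reduceCtorEq] at h <;> rfl

theorem exists_joinNeg_iff_vertexClass_eq {x y z : JoinVertex I J} (hxy : (gadgetJoin I J).Adj x y)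
    (hy : x.isLeft = y.isLeft) (hz : z.isLeft ≠ x.isLeft) :
    ∃ t, (JoinNeg r x z ↔ vertexClass x = t) ∧ (JoinNeg r y z ↔ vertexClass y = t) := by
  rcases x with ⟨i, k⟩ | ⟨j, k⟩ <;> rcases y with ⟨_, l⟩ | ⟨_, l⟩ <;>
    rcases z with ⟨i', m⟩ | ⟨j', m⟩ <;>
    simp only [Sum.isLeft_inl, Sum.isLeft_inr, reduceCtorEq, ne_eq, not_true_eq_false,
      not_false_eq_true] at hy hz <;>
    obtain ⟨rfl, -⟩ := hxy
  · refine ⟨gadgetClass m - r i j', ?_, ?_⟩ <;>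
      simp only [JoinNeg, vertexClass, Sum.elim_inl, Function.comp_apply] <;>
      rw [sub_eq_iff_eq_add', eq_sub_iff_add_eq, eq_comm]
  · refine ⟨gadgetClass m + r i' j, ?_, ?_⟩ <;>
      simp only [JoinNeg, vertexClass, Sum.elim_inr, Function.comp_apply] <;>
      rw [sub_eq_iff_eq_add']

theorem vertexClass_eq_of_triangle {x y z : JoinVertex I J} (hxy : (gadgetJoin I J).Adj x y)
    (hyz : (gadgetJoin I J).Adj y z) (hxz : (gadgetJoin I J).Adj x z)
    (hy : x.isLeft = y.isLeft) (hz : x.isLeft = z.isLeft) :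
    vertexClass x = vertexClass y ∨ vertexClass y = vertexClass z ∨
      vertexClass x = vertexClass z := by
  rcases x with ⟨i, k⟩ | ⟨j, k⟩ <;> rcases y with ⟨_, l⟩ | ⟨_, l⟩ <;>
    rcases z with ⟨_, m⟩ | ⟨_, m⟩ <;>
    simp only [Sum.isLeft_inl, Sum.isLeft_inr, reduceCtorEq] at hy hz <;>
    obtain ⟨rfl, hkl⟩ := hxy <;> obtain ⟨rfl, hlm⟩ := hyz <;>
    exact gadgetClass_eq_of_triangle k l m hkl hlm hxz.2

theorem ZMod.three_sub_eq_of_ne : ∀ a₁ a₂ b₁ b₂ s : ZMod 3, a₁ ≠ a₂ → b₁ ≠ b₂ →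
    b₁ - a₁ = s ∨ b₂ - a₁ = s ∨ b₁ - a₂ = s ∨ b₂ - a₂ = s := by
  decide

theorem joinNeg_of_vertexClass_ne {x₁ x₂ y₁ y₂ : JoinVertex I J}
    (hx : (gadgetJoin I J).Adj x₁ x₂) (hy : (gadgetJoin I J).Adj y₁ y₂)
    (hx' : x₁.isLeft = x₂.isLeft) (hy' : y₁.isLeft = y₂.isLeft) (hxy : y₁.isLeft ≠ x₁.isLeft)
    (hcx : vertexClass x₁ ≠ vertexClass x₂) (hcy : vertexClass y₁ ≠ vertexClass y₂) :
    JoinNeg r x₁ y₁ ∨ JoinNeg r x₁ y₂ ∨ JoinNeg r x₂ y₁ ∨ JoinNeg r x₂ y₂ := by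
  rcases x₁ with ⟨_, _⟩ | ⟨j, _⟩ <;> rcases x₂ with ⟨_, _⟩ | ⟨_, _⟩ <;>
    rcases y₁ with ⟨i, _⟩ | ⟨_, _⟩ <;> rcases y₂ with ⟨_, _⟩ | ⟨_, _⟩ <;>
    simp only [Sum.isLeft_inl, Sum.isLeft_inr, reduceCtorEq, ne_eq, not_true_eq_false]
      at hx' hy' hxy <;>
    obtain ⟨rfl, -⟩ := hx <;> obtain ⟨rfl, -⟩ := hy
  · exact ZMod.three_sub_eq_of_ne _ _ _ _ _ hcx hcy
  · have := ZMod.three_sub_eq_of_ne _ _ _ _ (r i j) hcy hcx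
    simp only [JoinNeg]
    tauto

theorem not_joinNeg_of_joinNeg_of_joinNeg {x y z : JoinVertex I J}
    (hxy : (gadgetJoin I J).Adj x y) (hy : x.isLeft = y.isLeft) (hz : z.isLeft ≠ x.isLeft)
    (hxz : JoinNeg r x z) (hyz : JoinNeg r y z) : ¬ JoinNeg r x y := by
  obtain ⟨t, hxt, hyt⟩ := exists_joinNeg_iff_vertexClass_eq r hxy hy hz
  rw [joinNeg_iff_of_isLeft_eq r hy, not_not, hxt.1 hxz, hyt.1 hyz]

theorem joinNeg_iff_of_not_joinNeg {x y z : JoinVertex I J} (hxy : (gadgetJoin I J).Adj x y)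
    (hy : x.isLeft = y.isLeft) (hz : z.isLeft ≠ x.isLeft) (h : ¬ JoinNeg r x y) :
    JoinNeg r x z ↔ JoinNeg r y z := by
  obtain ⟨t, hxt, hyt⟩ := exists_joinNeg_iff_vertexClass_eq r hxy hy hz
  rw [joinNeg_iff_of_isLeft_eq r hy, not_not] at h
  rw [hxt, hyt, h]

theorem not_joinNeg_of_not_joinNeg {x y z : JoinVertex I J} (hy : x.isLeft = y.isLeft)
    (hz : x.isLeft = z.isLeft) (hxz : ¬ JoinNeg r x z) (hyz : ¬ JoinNeg r y z) :
    ¬ JoinNeg r x y := by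
  rw [joinNeg_iff_of_isLeft_eq r hy, not_not]
  rw [joinNeg_iff_of_isLeft_eq r hz, not_not] at hxz
  rw [joinNeg_iff_of_isLeft_eq r (hy.symm.trans hz), not_not] at hyz
  exact hxz.trans hyz.symm

theorem Bool.eq_or_eq_of_ne {a b : Bool} (h : a ≠ b) (c : Bool) : c = a ∨ c = b := by
  rw [Bool.eq_not_of_ne h.symm]
  exact Bool.eq_or_eq_not c a

theorem not_hasNegTriangle : ¬ HasNegTriangle (gadgetJoin I J) (joinSign r) := by
  rintro ⟨x, y, z, hxy, hyz, hxz, sxy, syz, sxz⟩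
  simp only [joinSign_eq_neg_one] at sxy syz sxz
  have szy := (joinNeg_comm r y z).1 syz
  by_cases hy : x.isLeft = y.isLeft
  · by_cases hz : x.isLeft = z.isLeft
    · rw [joinNeg_iff_of_isLeft_eq r hy] at sxy
      rw [joinNeg_iff_of_isLeft_eq r (hy.symm.trans hz)] at syz
      rw [joinNeg_iff_of_isLeft_eq r hz] at sxz
      rcases vertexClass_eq_of_triangle hxy hyz hxz hy hz with h | h | h <;> contradiction
    · exact not_joinNeg_of_joinNeg_of_joinNeg r hxy hy (Ne.symm hz) sxz syz sxy
  · rcases Bool.eq_or_eq_of_ne hy z.isLeft with hz | hz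
    · exact not_joinNeg_of_joinNeg_of_joinNeg r hxz hz.symm (Ne.symm hy) sxy szy sxz
    · exact not_joinNeg_of_joinNeg_of_joinNeg r hyz hz.symm hy ((joinNeg_comm r x y).1 sxy)
        ((joinNeg_comm r x z).1 sxz) syz

theorem not_hasK4M : ¬ HasK4M (gadgetJoin I J) (joinSign r) := by
  rintro ⟨a, b, c, d, -, -, -, -, -, -, hab, hac, had, hbc, hbd, hcd, sab, scd, sac, sad, sbc,
    sbd⟩
  simp only [joinSign_eq_neg_one] at sab scd
  simp only [joinSign_eq_one] at sac sad sbc sbd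
  have sca := mt (joinNeg_comm r c a).1 sac
  have sda := mt (joinNeg_comm r d a).1 sad
  have scb := mt (joinNeg_comm r c b).1 sbc
  have sdb := mt (joinNeg_comm r d b).1 sbd
  by_cases hb : a.isLeft = b.isLeft
  · by_cases hc : a.isLeft = c.isLeft
    · exact not_joinNeg_of_not_joinNeg r hb hc sac sbc sab
    by_cases hd : a.isLeft = d.isLeft
    · exact not_joinNeg_of_not_joinNeg r hb hd sad sbd sab
    have hcd' : c.isLeft = d.isLeft := by
      rcases Bool.eq_or_eq_of_ne hc d.isLeft with h | h
      exacts [absurd h.symm hd, h.symm]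
    rcases joinNeg_of_vertexClass_ne r hab hcd hb hcd' (Ne.symm hc)
      ((joinNeg_iff_of_isLeft_eq r hb).1 sab) ((joinNeg_iff_of_isLeft_eq r hcd').1 scd)
      with h | h | h | h <;> contradiction
  rcases Bool.eq_or_eq_of_ne hb c.isLeft with hc | hc <;>
    rcases Bool.eq_or_eq_of_ne hb d.isLeft with hd | hd
  · exact not_joinNeg_of_not_joinNeg r (hc.trans hd.symm) hc sca sda scd
  · exact scb ((joinNeg_iff_of_not_joinNeg r hac hc.symm (fun h => hb h.symm) sac).1 sab)
  · exact sdb ((joinNeg_iff_of_not_joinNeg r had hd.symm (fun h => hb h.symm) sad).1 sab)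
  · exact not_joinNeg_of_not_joinNeg r (hc.trans hd.symm) hc scb sdb scd

theorem gadgetJoin_p4Free (I J : Type*) : P4Free (gadgetJoin I J) :=
  (gadget_p4Free.copies I).fullJoin (gadget_p4Free.copies J)

theorem negSubgraph_adj_inl_succ (i : I) (k : Fin 5) :
    (negSubgraph (gadgetJoin I J) (joinSign r)).Adj (.inl (i, k)) (.inl (i, k + 1)) :=
  ⟨⟨rfl, (gadget_adj_succ k).1⟩, (joinSign_eq_neg_one r).2 (gadget_adj_succ k).2⟩

theorem negSubgraph_adj_inr_succ (j : J) (k : Fin 5) :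
    (negSubgraph (gadgetJoin I J) (joinSign r)).Adj (.inr (j, k)) (.inr (j, k + 1)) :=
  ⟨⟨rfl, (gadget_adj_succ k).1⟩, (joinSign_eq_neg_one r).2 (gadget_adj_succ k).2⟩

end GadgetJoin

section PairRank

variable {I : Type*} [DecidableEq I]

def pairRank (i : I) (p : I × I) : ZMod 3 :=
  if i = p.1 then 1 else if i = p.2 then 2 else 0

theorem exists_pairRank_eq {i₁ i₂ i₃ : I} (h₁₂ : i₁ ≠ i₂) (h₁₃ : i₁ ≠ i₃) (h₂₃ : i₂ ≠ i₃)
    (t : ZMod 3) : ∃ i, (i = i₁ ∨ i = i₂ ∨ i = i₃) ∧ pairRank i (i₂, i₃) = t := by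
  have ht : t = 0 ∨ t = 1 ∨ t = 2 := by revert t; decide
  rcases ht with rfl | rfl | rfl
  · exact ⟨i₁, by simp [pairRank, h₁₂, h₁₃]⟩
  · exact ⟨i₂, by simp [pairRank]⟩
  · exact ⟨i₃, by simp [pairRank, h₂₃.symm]⟩

theorem six_le_chromaticNumber [Fintype I] (hI : 2 * 5 ^ 5 < Fintype.card I) :
    6 ≤ (negSubgraph (gadgetJoin I (I × I)) (joinSign pairRank)).chromaticNumber := by
  suffices ((6 : ℕ) : ℕ∞) ≤ _ by exact_mod_cast this
  rw [le_chromaticNumber_iff_coloring]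
  intro m C
  by_contra! hm
  have hm5 : m ≤ 5 := by
    have : m < 6 := by exact_mod_cast hm
    omega
  obtain ⟨y, hy⟩ := Fintype.exists_lt_card_fiber_of_mul_lt_card
    (fun i k => C (.inl (i, k)) : I → Fin 5 → Fin m) (n := 2) (by
      simp only [Fintype.card_fun, Fintype.card_fin]
      calc m ^ 5 * 2 ≤ 5 ^ 5 * 2 := by gcongr
        _ < Fintype.card I := by omega)
  obtain ⟨i₁, i₂, i₃, h₁, h₂, h₃, h₁₂, h₁₃, h₂₃⟩ := Finset.two_lt_card_iff.1 hy
  simp only [Finset.mem_filter, Finset.mem_univ, true_and] at h₁ h₂ h₃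
  obtain ⟨k, l, hkl⟩ := exists_eq_of_ne_succ (by simpa using hm5) y
    (fun l => C (.inr ((i₂, i₃), l)))
    (fun k => h₁ ▸ C.valid (negSubgraph_adj_inl_succ pairRank i₁ k))
    (fun l => C.valid (negSubgraph_adj_inr_succ pairRank (i₂, i₃) l))
  obtain ⟨i, hi, hrank⟩ := exists_pairRank_eq h₁₂ h₁₃ h₂₃ (gadgetClass l - gadgetClass k)
  have hyi : (fun k => C (.inl (i, k))) = y := by
    rcases hi with rfl | rfl | rfl <;> assumption
  refine C.valid (v := .inl (i, k)) (w := .inr ((i₂, i₃), l))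
    ⟨trivial, (joinSign_eq_neg_one pairRank).2 hrank.symm⟩ ?_
  rw [← hkl, ← hyi]

end PairRank

/-- there is a signed graph with no all-negative triangle, no (K_4,M),
no induced P_4, whose negative subgraph has chromatic number at least 6. -/
theorem stmt19 :
    ∃ (V : Type) (_ : Fintype V) (G : SimpleGraph V) (σ : Sym2 V → ℤˣ),
      ¬ HasNegTriangle G σ ∧ ¬ HasK4M G σ ∧
        ¬ HasInducedCopy (pathGraph 4) G ∧
        (6 : ℕ∞) ≤ (negSubgraph G σ).chromaticNumber :=
  ⟨JoinVertex (Fin 6251) (Fin 6251 × Fin 6251), inferInstance, gadgetJoin _ _,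
    joinSign pairRank, not_hasNegTriangle _, not_hasK4M _,
    (gadgetJoin_p4Free _ _).not_hasInducedCopy, six_le_chromaticNumber (by simp)⟩

end SignedGS
end
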